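/- arXiv:2506.18168 — 4 statements merged into one kernel-verified Lean document; each statement's English description precedes it below -/
import Mathlib

section
/- Let S, W, K be finite-dimensional real inner product spaces and let 𝒜 be the block operator on X = S × S × W × K of the form 𝒜(σ₀,σ₁,v,r) = (A₀σ₀ + H*r, A₁σ₁ + H*r, Mv, Hσ₀ + Hσ₁), where A₀, A₁, M are symmetric positive definite, H* is injective, and H is the adjoint of H*. Then 𝒜 is invertible. -/
open scoped RealInnerProductSpace

/-- The block operator `𝒜(σ₀,σ₁,v,r) = (A₀σ₀ + H*r, A₁σ₁ + H*r, Mv, Hσ₀ + Hσ₁)`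
is invertible when `A₀, A₁, M` are symmetric positive definite and `H*` is
injective (with `H` the adjoint of `H*`). -/
theorem block_operator_invertible
    {S W K : Type*}
    [NormedAddCommGroup S] [InnerProductSpace ℝ S] [FiniteDimensional ℝ S]
    [NormedAddCommGroup W] [InnerProductSpace ℝ W] [FiniteDimensional ℝ W]
    [NormedAddCommGroup K] [InnerProductSpace ℝ K] [FiniteDimensional ℝ K]
    (A₀ A₁ : S →ₗ[ℝ] S) (M : W →ₗ[ℝ] W)
    (H : S →ₗ[ℝ] K) (Hstar : K →ₗ[ℝ] S)
    (hA₀sym : ∀ σ τ : S, ⟪A₀ σ, τ⟫ = ⟪σ, A₀ τ⟫)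
    (hA₁sym : ∀ σ τ : S, ⟪A₁ σ, τ⟫ = ⟪σ, A₁ τ⟫)
    (hMsym : ∀ v w : W, ⟪M v, w⟫ = ⟪v, M w⟫)
    (hA₀pos : ∀ σ : S, σ ≠ 0 → 0 < ⟪A₀ σ, σ⟫)
    (hA₁pos : ∀ σ : S, σ ≠ 0 → 0 < ⟪A₁ σ, σ⟫)
    (hMpos : ∀ v : W, v ≠ 0 → 0 < ⟪M v, v⟫)
    (hadj : ∀ (σ : S) (η : K), ⟪H σ, η⟫ = ⟪σ, Hstar η⟫)
    (hinj : Function.Injective Hstar)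
    (𝒜 : (S × S × W × K) →ₗ[ℝ] (S × S × W × K))
    (h𝒜 : ∀ x : S × S × W × K,
      𝒜 x = (A₀ x.1 + Hstar x.2.2.2, A₁ x.2.1 + Hstar x.2.2.2, M x.2.2.1,
             H x.1 + H x.2.1)) :
    Function.Bijective 𝒜 := by

  have hinjA : Function.Injective 𝒜 := by
    rw [injective_iff_map_eq_zero]
    rintro ⟨σ₀, σ₁, v, r⟩ hx
    rw [h𝒜] at hx
    simp only [Prod.mk_eq_zero] at hx
    obtain ⟨h1, h2, h3, h4⟩ := hx
    -- v = 0
    have hv : v = 0 := by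
      by_contra hv
      have := hMpos v hv
      rw [h3, inner_zero_left] at this
      exact lt_irrefl 0 this
    -- nonnegativity
    have hA₀nn : ∀ σ : S, 0 ≤ ⟪A₀ σ, σ⟫ := by
      intro σ
      by_cases h : σ = 0
      · simp [h]
      · exact (hA₀pos σ h).le
    have hA₁nn : ∀ σ : S, 0 ≤ ⟪A₁ σ, σ⟫ := by
      intro σ
      by_cases h : σ = 0
      · simp [h]
      · exact (hA₁pos σ h).le
    have e1 : A₀ σ₀ = -Hstar r := by linear_combination (norm := abel_nf) h1
    have e2 : A₁ σ₁ = -Hstar r := by linear_combination (norm := abel_nf) h2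
    have key : ⟪A₀ σ₀, σ₀⟫ + ⟪A₁ σ₁, σ₁⟫ = 0 := by
      have : ⟪A₀ σ₀, σ₀⟫ + ⟪A₁ σ₁, σ₁⟫ = -⟪H σ₀ + H σ₁, r⟫ := by
        rw [e1, e2, inner_neg_left, inner_neg_left, inner_add_left, hadj, hadj,
          real_inner_comm (Hstar r) σ₀, real_inner_comm (Hstar r) σ₁]
        ring
      rw [this, h4, inner_zero_left, neg_zero]
    have hs0 : σ₀ = 0 := by
      by_contra h
      have := hA₀pos σ₀ h
      nlinarith [hA₁nn σ₁]
    have hs1 : σ₁ = 0 := by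
      by_contra h
      have := hA₁pos σ₁ h
      nlinarith [hA₀nn σ₀]
    have hr : r = 0 := by
      apply hinj
      rw [map_zero]
      rw [hs0, map_zero] at e1
      exact neg_eq_zero.mp e1.symm
    exact Prod.ext hs0 (Prod.ext hs1 (Prod.ext hv hr))
  exact ⟨hinjA, LinearMap.injective_iff_surjective.mp hinjA⟩
end

section
/- Let a, b, v : [0,T] → ℝ be continuous nonnegative functions with a, b, v differentiable, and suppose (d/dt)(a(t)² + b(t)² + v(t)²) ≤ C f(t) v(t) on [0,T] for a continuous nonnegative f and constant C > 0. Then max over s ∈ [0,T] of (a(s) + b(s) + v(s)) ≤ C' (a(0) + b(0) + v(0) + ∫₀^T f(s) ds) for some constant C' depending only on C. -/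
open Set intervalIntegral

/-- Abstract stability estimate: if `(a² + b² + v²)' ≤ C f v` on `[0,T]` with
everything nonnegative, then `a + b + v` is uniformly bounded by the initial
data plus the time integral of `f`, with a constant depending only on `C`. -/
theorem energy_stability_estimate (C : ℝ) (hC : 0 < C) :
    ∃ C' : ℝ, 0 < C' ∧
      ∀ (T : ℝ), 0 < T →
      ∀ (a b v f : ℝ → ℝ),
        ContinuousOn a (Icc 0 T) → ContinuousOn b (Icc 0 T) →
        ContinuousOn v (Icc 0 T) → ContinuousOn f (Icc 0 T) →
        (∀ t ∈ Icc 0 T, 0 ≤ a t) → (∀ t ∈ Icc 0 T, 0 ≤ b t) →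
        (∀ t ∈ Icc 0 T, 0 ≤ v t) → (∀ t ∈ Icc 0 T, 0 ≤ f t) →
        DifferentiableOn ℝ a (Icc 0 T) → DifferentiableOn ℝ b (Icc 0 T) →
        DifferentiableOn ℝ v (Icc 0 T) →
        (∀ t ∈ Icc 0 T,
          derivWithin (fun s => a s ^ 2 + b s ^ 2 + v s ^ 2) (Icc 0 T) t
            ≤ C * f t * v t) →
        ∀ s ∈ Icc 0 T,
          a s + b s + v s ≤ C' * (a 0 + b 0 + v 0 + ∫ r in (0:ℝ)..T, f r) := by
  refine ⟨3 * (1 + C), by positivity, ?_⟩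
  intro T hT a b v f ha hb hv hf ha0 hb0 hv0 hf0 hda hdb hdv hderiv s hs
  have hTle : (0:ℝ) ≤ T := hT.le
  have h0mem : (0:ℝ) ∈ Icc 0 T := ⟨le_refl 0, hTle⟩
  set E : ℝ → ℝ := fun s => a s ^ 2 + b s ^ 2 + v s ^ 2 with hE
  -- maximum of a + b + v
  obtain ⟨t₀, ht₀, hmax⟩ :=
    (isCompact_Icc (a := (0:ℝ)) (b := T)).exists_isMaxOn (nonempty_Icc.2 hTle)
      ((ha.add hb).add hv)
  set M : ℝ := a t₀ + b t₀ + v t₀ with hM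
  have hMnn : 0 ≤ M := by
    have := ha0 t₀ ht₀; have := hb0 t₀ ht₀; have := hv0 t₀ ht₀; positivity
  have hvleM : ∀ t ∈ Icc 0 T, v t ≤ M := by
    intro t ht
    have h1 : a t + b t + v t ≤ M := hmax ht
    have := ha0 t ht; have := hb0 t ht
    linarith
  -- interval integrability of f
  have hfint : ∀ x ∈ Icc 0 T, IntervalIntegrable f MeasureTheory.volume 0 x := by
    intro x hx
    apply ContinuousOn.intervalIntegrable
    apply hf.mono
    rw [uIcc_of_le hx.1]
    exact Icc_subset_Icc le_rfl hx.2
  have hFnn : (0:ℝ) ≤ ∫ r in (0:ℝ)..T, f r := by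
    apply intervalIntegral.integral_nonneg hTle
    intro u hu; exact hf0 u hu
  -- the auxiliary function h is antitone on [0,T]
  set g : ℝ → ℝ := fun t => E t - C * M * ∫ r in (0:ℝ)..t, f r with hg
  have hEcont : ContinuousOn E (Icc 0 T) := ((ha.pow 2).add (hb.pow 2)).add (hv.pow 2)
  have hprim : ContinuousOn (fun t => ∫ r in (0:ℝ)..t, f r) (Icc 0 T) := by
    have : ContinuousOn (fun t => ∫ r in (0:ℝ)..t, f r) (uIcc 0 T) := by
      apply intervalIntegral.continuousOn_primitive_interval
      rw [uIcc_of_le hTle]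
      exact hf.integrableOn_compact isCompact_Icc
    rwa [uIcc_of_le hTle] at this
  have hgant : AntitoneOn g (Icc 0 T) := by
    apply antitoneOn_of_deriv_nonpos (convex_Icc 0 T)
      (hEcont.sub (continuousOn_const.mul hprim))
    · rw [interior_Icc]
      intro x hx
      have hxm : x ∈ Icc 0 T := Ioo_subset_Icc_self hx
      have hnhds : Icc 0 T ∈ nhds x := Icc_mem_nhds hx.1 hx.2
      have hEd : DifferentiableAt ℝ E x :=
        ((((hda x hxm).pow 2).add ((hdb x hxm).pow 2)).add
          ((hdv x hxm).pow 2)).differentiableAt hnhds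
      have hId : HasDerivAt (fun t => ∫ r in (0:ℝ)..t, f r) (f x) x := by
        apply intervalIntegral.integral_hasDerivAt_right (hfint x hxm)
        · exact ⟨Icc 0 T, hnhds, hf.aestronglyMeasurable measurableSet_Icc⟩
        · exact hf.continuousAt hnhds
      exact (hEd.sub ((hId.const_mul (C * M)).differentiableAt)).differentiableWithinAt
    · rw [interior_Icc]
      intro x hx
      have hxm : x ∈ Icc 0 T := Ioo_subset_Icc_self hx
      have hnhds : Icc 0 T ∈ nhds x := Icc_mem_nhds hx.1 hx.2
      have hEd : DifferentiableAt ℝ E x :=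
        ((((hda x hxm).pow 2).add ((hdb x hxm).pow 2)).add
          ((hdv x hxm).pow 2)).differentiableAt hnhds
      have hId : HasDerivAt (fun t => ∫ r in (0:ℝ)..t, f r) (f x) x := by
        apply intervalIntegral.integral_hasDerivAt_right (hfint x hxm)
        · exact ⟨Icc 0 T, hnhds, hf.aestronglyMeasurable measurableSet_Icc⟩
        · exact hf.continuousAt hnhds
      have hgderiv : deriv g x = deriv E x - C * M * f x := by
        have := (hEd.hasDerivAt.sub (hId.const_mul (C * M))).deriv
        exact this
      show deriv g x ≤ 0
      rw [hgderiv]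
      have hEw : derivWithin E (Icc 0 T) x = deriv E x := derivWithin_of_mem_nhds hnhds
      have h1 : deriv E x ≤ C * f x * v x := by rw [← hEw]; exact hderiv x hxm
      have h2 : C * f x * v x ≤ C * M * f x := by
        nlinarith [mul_nonneg (mul_nonneg hC.le (hf0 x hxm))
          (sub_nonneg.2 (hvleM x hxm))]
      linarith
  -- deduce the energy bound at the max point
  have hkey : E t₀ ≤ E 0 + C * M * ∫ r in (0:ℝ)..T, f r := by
    have h1 : g t₀ ≤ g 0 := hgant h0mem ht₀ ht₀.1
    have h2 : (∫ r in (0:ℝ)..t₀, f r) ≤ ∫ r in (0:ℝ)..T, f r := by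
      have hsub : ((∫ r in (0:ℝ)..T, f r) - ∫ r in (0:ℝ)..t₀, f r)
          = ∫ r in t₀..T, f r :=
        intervalIntegral.integral_interval_sub_left (hfint T (right_mem_Icc.2 hTle))
          (hfint t₀ ht₀)
      have hnn : (0:ℝ) ≤ ∫ r in t₀..T, f r := by
        apply intervalIntegral.integral_nonneg ht₀.2
        intro u hu; exact hf0 u ⟨le_trans ht₀.1 hu.1, hu.2⟩
      linarith
    simp only [hg, intervalIntegral.integral_same, mul_zero, sub_zero] at h1
    nlinarith [mul_nonneg (mul_nonneg hC.le hMnn) (sub_nonneg.2 h2)]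
  -- algebra
  have hsle : a s + b s + v s ≤ M := hmax hs
  have hM2 : M ^ 2 ≤ 3 * E t₀ := by
    simp only [hM, hE]
    nlinarith [sq_nonneg (a t₀ - b t₀), sq_nonneg (a t₀ - v t₀), sq_nonneg (b t₀ - v t₀)]
  have hE0 : E 0 ≤ (a 0 + b 0 + v 0) ^ 2 := by
    have := ha0 0 h0mem; have := hb0 0 h0mem; have := hv0 0 h0mem
    simp only [hE]; nlinarith
  set S : ℝ := a 0 + b 0 + v 0 with hS
  set F : ℝ := ∫ r in (0:ℝ)..T, f r with hF
  have hSnn : 0 ≤ S := by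
    have := ha0 0 h0mem; have := hb0 0 h0mem; have := hv0 0 h0mem
    simp only [hS]; linarith
  have hMS : M ^ 2 ≤ 3 * S ^ 2 + 3 * C * M * F := by nlinarith
  have hfin : M ≤ 3 * (1 + C) * (S + F) := by
    by_contra hlt
    push_neg at hlt
    have hBnn : (0:ℝ) ≤ 3 * (1 + C) * (S + F) := by positivity
    have hMpos : 0 < M := lt_of_le_of_lt hBnn hlt
    have h1 : M * (3 * (1 + C) * (S + F)) < M * M := mul_lt_mul_of_pos_left hlt hMpos
    have hMS' : 0 ≤ S * (M - S) := mul_nonneg hSnn (by nlinarith)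
    nlinarith [mul_nonneg hFnn hMpos.le, mul_nonneg (mul_nonneg hC.le hSnn) hMpos.le]
  linarith
end

section
/- Discrete Gronwall inequality: let τ > 0, c ≥ 0 with cτ < 2, and let (δ_n)_{n=0}^N be nonnegative reals satisfying (δ_n² − δ_{n-1}²)/τ ≤ c((δ_n² + δ_{n-1}²)/2 + g (δ_n + δ_{n-1})) for all 1 ≤ n ≤ N, where g ≥ 0 is a constant. If δ_0 = 0, then max_{0 ≤ n ≤ N} δ_n ≤ C g for a constant C depending only on c, τ N (the final time), but not on τ individually. -/
set_option maxHeartbeats 1000000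

namespace CrankNicolson


/-- Discrete Gronwall inequality for the Crank–Nicolson error recursion:
the constant `C` depends only on `c` and the final time `Tf = τ·N`, not on
`τ` individually. -/
theorem discrete_gronwall (c Tf : ℝ) (hc : 0 ≤ c) (hTf : 0 < Tf) :
    ∃ C : ℝ, 0 < C ∧
      ∀ (τ : ℝ) (N : ℕ) (δ : ℕ → ℝ) (g : ℝ),
        0 < τ → c * τ < 2 → τ * (N : ℝ) = Tf → 0 ≤ g →
        (∀ n, 0 ≤ δ n) → δ 0 = 0 →
        (∀ n : ℕ, 1 ≤ n → n ≤ N →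
          (δ n ^ 2 - δ (n - 1) ^ 2) / τ
            ≤ c * ((δ n ^ 2 + δ (n - 1) ^ 2) / 2 + g * (δ n + δ (n - 1)))) →
        ∀ n ≤ N, δ n ≤ C * g := by
  set N0 : ℕ := ⌊c * Tf / 2⌋₊ + 1 with hN0def
  have hN0pos : (0 : ℝ) < (N0 : ℝ) := by positivity
  have hfloor : c * Tf / 2 < (N0 : ℝ) := by
    have := Nat.lt_floor_add_one (c * Tf / 2)
    push_cast [hN0def]
    linarith
  set η : ℝ := 1 - c * Tf / (2 * N0) with hηdef
  have hη : 0 < η := by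
    have h1 : c * Tf / (2 * N0) < 1 := by
      rw [div_lt_one (by positivity)]
      linarith
    simp only [hηdef]; linarith
  refine ⟨Real.exp (c * Tf / η), Real.exp_pos _, ?_⟩
  intro τ N δ g hτ hcτ hTN hg hδ hδ0 hrec
  have hNpos : 0 < N := by
    rcases Nat.eq_zero_or_pos N with h | h
    · exfalso; rw [h] at hTN; simp at hTN; linarith
    · exact h
  have hNR : (0 : ℝ) < (N : ℝ) := by exact_mod_cast hNpos
  have hcTfN : c * Tf / 2 < (N : ℝ) := by
    have h7 : c * τ * (N : ℝ) < 2 * N := by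
      have := mul_lt_mul_of_pos_right hcτ hNR
      linarith
    have hTf' : c * Tf = c * τ * N := by rw [← hTN]; ring
    rw [hTf']
    linarith
  have hN0leN : (N0 : ℝ) ≤ (N : ℝ) := by
    have h1 : ⌊c * Tf / 2⌋₊ < N := by
      have h2 : (⌊c * Tf / 2⌋₊ : ℝ) ≤ c * Tf / 2 := Nat.floor_le (by positivity)
      exact_mod_cast lt_of_le_of_lt h2 hcTfN
    exact_mod_cast h1
  set x : ℝ := c * τ / 2 with hxdef
  have hx0 : 0 ≤ x := by positivity
  have hx1 : x < 1 := by simp only [hxdef]; linarith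
  have hx2 : c * Tf = 2 * x * N := by
    rw [← hTN]; simp only [hxdef]; ring
  have hxη : η ≤ 1 - x := by
    have hxval : x = c * Tf / (2 * N) := by
      rw [hx2]; field_simp
    have : c * Tf / (2 * N) ≤ c * Tf / (2 * N0) := by
      apply div_le_div_of_nonneg_left (by positivity) (by positivity)
      linarith
    simp only [hηdef, hxval]; linarith
  set ρ : ℝ := (1 + x) / (1 - x) with hρdef
  have h1x : 0 < 1 - x := by linarith
  have hρ1 : 1 ≤ ρ := by
    rw [hρdef, le_div_iff₀ h1x]; linarith
  have hρ0 : 0 ≤ ρ := by linarith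
  have key : ∀ n ≤ N, δ n ≤ g * (ρ ^ n - 1) := by
    intro n
    induction n with
    | zero => intro _; simp [hδ0]
    | succ n ih =>
      intro hn
      have hb := ih (Nat.le_of_succ_le hn)
      have hr := hrec (n + 1) (Nat.succ_le_succ (Nat.zero_le n)) hn
      simp only [Nat.add_sub_cancel] at hr
      have ha0 := hδ (n + 1)
      have hb0 := hδ n
      have hρn1 : 1 ≤ ρ ^ (n + 1) := by simpa using pow_le_pow_left₀ (by norm_num : (0:ℝ) ≤ 1) hρ1 (n+1)
      by_cases hs : δ (n + 1) + δ n = 0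
      · have h8 : δ (n + 1) = 0 := by linarith
        rw [h8]
        have h9 : 0 ≤ ρ ^ (n + 1) - 1 := by linarith
        positivity
      · have hs' : 0 < δ (n + 1) + δ n :=
          lt_of_le_of_ne (by positivity) (Ne.symm hs)
        have h1 : δ (n + 1) ^ 2 - δ n ^ 2 ≤
            c * τ * ((δ (n + 1) ^ 2 + δ n ^ 2) / 2 + g * (δ (n + 1) + δ n)) := by
          have := (div_le_iff₀ hτ).mp hr
          nlinarith
        have h2 : (1 - x) * δ (n + 1) ≤ (1 + x) * δ n + 2 * x * g := by
          rw [hxdef]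
          nlinarith [h1, hs',
            mul_nonneg (mul_nonneg (mul_nonneg hc hτ.le) hb0) ha0]
        have hρn : (1 - x) * ρ ^ (n + 1) = (1 + x) * ρ ^ n := by
          rw [pow_succ, hρdef]; field_simp
        have h3 : (1 - x) * δ (n + 1) ≤ (1 + x) * (g * (ρ ^ n - 1)) + 2 * x * g := by
          have hmul := mul_le_mul_of_nonneg_left hb (by linarith : (0:ℝ) ≤ 1 + x)
          linarith
        have h4 : (1 + x) * (g * (ρ ^ n - 1)) + 2 * x * g
            = (1 - x) * (g * (ρ ^ (n + 1) - 1)) := by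
          have h10 : (1 - x) * (g * (ρ ^ (n + 1) - 1))
              = g * ((1 - x) * ρ ^ (n + 1)) - (1 - x) * g := by ring
          rw [h10, hρn]; ring
        rw [h4] at h3
        exact le_of_mul_le_mul_left (by linarith [h3]) h1x
  intro n hn
  have h1 := key n hn
  have hρN : ρ ^ n ≤ Real.exp (c * Tf / η) := by
    have step1 : ρ ^ n ≤ ρ ^ N := pow_le_pow_right₀ hρ1 hn
    have hexp : ρ ≤ Real.exp (2 * x / (1 - x)) := by
      have h5 : ρ = 1 + 2 * x / (1 - x) := by
        rw [hρdef]; field_simp; ring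
      rw [h5]
      have := Real.add_one_le_exp (2 * x / (1 - x))
      linarith
    have step2 : ρ ^ N ≤ Real.exp (2 * x / (1 - x)) ^ N :=
      pow_le_pow_left₀ hρ0 hexp N
    have step3 : Real.exp (2 * x / (1 - x)) ^ N
        = Real.exp ((N : ℝ) * (2 * x / (1 - x))) := by
      rw [← Real.exp_nat_mul]
    have step4 : (N : ℝ) * (2 * x / (1 - x)) ≤ c * Tf / η := by
      have h6 : (N : ℝ) * (2 * x / (1 - x)) = c * Tf / (1 - x) := by
        rw [hx2]; ring
      rw [h6]
      exact div_le_div_of_nonneg_left (by positivity) hη hxη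
    calc ρ ^ n ≤ ρ ^ N := step1
      _ ≤ Real.exp (2 * x / (1 - x)) ^ N := step2
      _ = Real.exp ((N : ℝ) * (2 * x / (1 - x))) := step3
      _ ≤ Real.exp (c * Tf / η) := Real.exp_le_exp.mpr step4
  have hgρ : g * (ρ ^ n - 1) ≤ g * ρ ^ n := by nlinarith
  have hfin : g * ρ ^ n ≤ g * Real.exp (c * Tf / η) :=
    mul_le_mul_of_nonneg_left hρN hg
  calc δ n ≤ g * (ρ ^ n - 1) := h1
    _ ≤ g * ρ ^ n := hgρ
    _ ≤ g * Real.exp (c * Tf / η) := hfin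
    _ = Real.exp (c * Tf / η) * g := by ring

end CrankNicolson
end

section
/- Let a_h and a be two symmetric bilinear forms on a real inner product space, with a_h coercive and continuous. Suppose Π is an idempotent linear projection and a_h(σ, τ) = a(Πσ, Πτ) + s(σ − Πσ, τ − Πτ), where s is a symmetric bilinear form satisfying α₁‖w‖² ≤ s(w,w) ≤ α₂‖w‖² for w in the range of (I − Π), and a satisfies c₁‖w‖² ≤ a(w,w) ≤ c₂‖w‖². Then a_h is coercive and continuous: min(c₁, α₁)/2 · ‖τ‖² ≤ a_h(τ,τ) and a_h(σ,τ) ≤ C‖σ‖‖τ‖ for a constant C depending only on c₂, α₂. -/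
/-- VEM stabilisation lemma: the discrete form
`a_h(σ,τ) = a(Pσ,Pτ) + s(σ−Pσ, τ−Pτ)` built from an orthogonal projection `P`
inherits coercivity and continuity from `a` and the stabiliser `s`. -/
theorem vem_stabilisation_lemma
    {X : Type*} [NormedAddCommGroup X] [InnerProductSpace ℝ X]
    (a ah s : X →ₗ[ℝ] X →ₗ[ℝ] ℝ)
    (P : X →ₗ[ℝ] X) (hidem : P ∘ₗ P = P)
    (hpyth : ∀ τ : X, ‖τ‖ ^ 2 = ‖P τ‖ ^ 2 + ‖τ - P τ‖ ^ 2)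
    (hdef : ∀ σ τ : X, ah σ τ = a (P σ) (P τ) + s (σ - P σ) (τ - P τ))
    (hasym : ∀ σ τ : X, a σ τ = a τ σ)
    (hssym : ∀ σ τ : X, s σ τ = s τ σ)
    (α₁ α₂ c₁ c₂ : ℝ) (hα₁ : 0 < α₁) (hα₂ : 0 < α₂) (hc₁ : 0 < c₁) (hc₂ : 0 < c₂)
    (hs : ∀ τ : X, α₁ * ‖τ - P τ‖ ^ 2 ≤ s (τ - P τ) (τ - P τ) ∧
                   s (τ - P τ) (τ - P τ) ≤ α₂ * ‖τ - P τ‖ ^ 2)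
    (ha : ∀ w : X, c₁ * ‖w‖ ^ 2 ≤ a w w ∧ a w w ≤ c₂ * ‖w‖ ^ 2) :
    (∀ τ : X, min c₁ α₁ / 2 * ‖τ‖ ^ 2 ≤ ah τ τ) ∧
    (∃ C : ℝ, 0 < C ∧ C = max c₂ α₂ ∧
      ∀ σ τ : X, ah σ τ ≤ C * ‖σ‖ * ‖τ‖) := by
  set C := max c₂ α₂ with hC
  have hC0 : 0 < C := lt_max_of_lt_left hc₂
  -- coercivity
  have coer : ∀ τ : X, min c₁ α₁ / 2 * ‖τ‖ ^ 2 ≤ ah τ τ := by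
    intro τ
    have h1 := (ha (P τ)).1
    have h2 := (hs τ).1
    have hp := hpyth τ
    have hm1 : min c₁ α₁ ≤ c₁ := min_le_left _ _
    have hm2 : min c₁ α₁ ≤ α₁ := min_le_right _ _
    have hm0 : 0 < min c₁ α₁ := lt_min hc₁ hα₁
    rw [hdef]
    nlinarith [sq_nonneg ‖P τ‖, sq_nonneg ‖τ - P τ‖, sq_nonneg ‖τ‖]
  refine ⟨coer, C, hC0, rfl, ?_⟩
  -- key quadratic bound
  have key : ∀ σ τ : X, ah σ τ ≤ C / 2 * (‖σ‖ ^ 2 + ‖τ‖ ^ 2) := by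
    intro σ τ
    -- polarization for a
    have ea : a (P σ - P τ) (P σ - P τ)
        = a (P σ) (P σ) - a (P σ) (P τ) - a (P τ) (P σ) + a (P τ) (P τ) := by
      simp [map_sub, LinearMap.sub_apply]; ring
    have hann : 0 ≤ a (P σ - P τ) (P σ - P τ) :=
      le_trans (by positivity) (ha (P σ - P τ)).1
    have ha2 : a (P σ) (P τ) ≤ (a (P σ) (P σ) + a (P τ) (P τ)) / 2 := by
      have := hasym (P σ) (P τ); linarith [hann, ea.symm ▸ hann]
    -- polarization for s
    have hw : (σ - τ) - P (σ - τ) = (σ - P σ) - (τ - P τ) := by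
      simp [map_sub]; abel
    have hsnn : 0 ≤ s ((σ - P σ) - (τ - P τ)) ((σ - P σ) - (τ - P τ)) := by
      rw [← hw]; exact le_trans (by positivity) (hs (σ - τ)).1
    have es : s ((σ - P σ) - (τ - P τ)) ((σ - P σ) - (τ - P τ))
        = s (σ - P σ) (σ - P σ) - s (σ - P σ) (τ - P τ)
          - s (τ - P τ) (σ - P σ) + s (τ - P τ) (τ - P τ) := by
      simp [map_sub, LinearMap.sub_apply]; ring
    have hs2 : s (σ - P σ) (τ - P τ)
        ≤ (s (σ - P σ) (σ - P σ) + s (τ - P τ) (τ - P τ)) / 2 := by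
      have := hssym (σ - P σ) (τ - P τ); linarith [es ▸ hsnn]
    have u1 := (ha (P σ)).2
    have u2 := (ha (P τ)).2
    have u3 := (hs σ).2
    have u4 := (hs τ).2
    have hp1 := hpyth σ
    have hp2 := hpyth τ
    have hm1 : c₂ ≤ C := le_max_left _ _
    have hm2 : α₂ ≤ C := le_max_right _ _
    rw [hdef]
    nlinarith [sq_nonneg ‖P σ‖, sq_nonneg ‖P τ‖, sq_nonneg ‖σ - P σ‖, sq_nonneg ‖τ - P τ‖]
  -- scaling trick
  intro σ τ
  by_cases hσ : σ = 0
  · simp [hσ]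
  by_cases hτ : τ = 0
  · simp [hτ]
  have hσ0 : 0 < ‖σ‖ := norm_pos_iff.mpr hσ
  have hτ0 : 0 < ‖τ‖ := norm_pos_iff.mpr hτ
  set t : ℝ := Real.sqrt (‖τ‖ / ‖σ‖) with ht
  have ht0 : 0 < t := Real.sqrt_pos.mpr (by positivity)
  have ht2 : t ^ 2 = ‖τ‖ / ‖σ‖ := Real.sq_sqrt (by positivity)
  have hval : ah (t • σ) (t⁻¹ • τ) = ah σ τ := by
    simp [map_smul, LinearMap.smul_apply, smul_eq_mul]
    field_simp
  have hb := key (t • σ) (t⁻¹ • τ)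
  rw [hval] at hb
  have hn1 : ‖t • σ‖ ^ 2 = ‖σ‖ * ‖τ‖ := by
    rw [norm_smul, mul_pow, Real.norm_eq_abs, sq_abs, ht2]
    field_simp
  have hn2 : ‖t⁻¹ • τ‖ ^ 2 = ‖σ‖ * ‖τ‖ := by
    rw [norm_smul, mul_pow, Real.norm_eq_abs, sq_abs, inv_pow, ht2]
    field_simp
  rw [hn1, hn2] at hb
  calc ah σ τ ≤ C / 2 * (‖σ‖ * ‖τ‖ + ‖σ‖ * ‖τ‖) := hb
    _ = C * ‖σ‖ * ‖τ‖ := by ring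
end
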